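/- Let ω be a centered non-degenerate random variable with E[e^{3βω}] < ∞ for fixed β > 0, set c_β := e^{λ(2β)-2λ(β)} - 1 and ξ := exp(βω - λ(β) + h) - 1. Then with the choice a = 1/c_β there exist constants C > 0 and h_0 > 0 such that for all h ∈ (0, h_0): |E[log(1 + a·h·ξ)] - (a h² - c_β a² h²/2)| ≤ C h³. In particular E[log(1 + a h ξ)] ≥ h²/(4 c_β) for h small. -/

import Mathlib

/-! With `Y = 1 + ξ = e^{βω - λ(β) + h}` one has `E[Y^k] = e^{kh + λ(kβ) - kλ(β)}`, so
`E ξ = e^h - 1` and `E ξ² = e^{2h}(1 + c_β) - 2e^h + 1`. The Taylor bound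
`|log(1+x) - x + x²/2| ≤ 4|x|³` for `x ≥ -1/2`, applied to `x = ahξ ≥ -ah`, gives
`E log(1 + ahξ) = ah E ξ - (ah)² E ξ² / 2 + O(h³ E[Y³ + 1])`, and expanding the exponentials turns
the main part into `ah² - c_β a²h²/2 + O(h³)`. The constant `c_β` is the variance of
`e^{βω - λ(β)}`, which is positive because a centred non-degenerate `ω` is not almost surely
constant; for `a = 1/c_β` the main part is `h²/(2c_β)`, which dominates the `O(h³)` error for
small `h`. -/

open MeasureTheory Real Set

/-- Cumulant generating function `λ(t) = log E[e^{tW}]`. -/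
noncomputable def cumulant {Ω : Type*} [MeasureSpace Ω] (W : Ω → ℝ) (t : ℝ) : ℝ :=
  Real.log (∫ ω, Real.exp (t * W ω))

/-- `ξ = exp(βω - λ(β) + h) - 1`. -/
noncomputable def xiRV {Ω : Type*} [MeasureSpace Ω] (W : Ω → ℝ) (β h : ℝ) (ω : Ω) : ℝ :=
  Real.exp (β * W ω - cumulant W β + h) - 1

/-- `c_β = e^{λ(2β) - 2λ(β)} - 1`. -/
noncomputable def cBeta {Ω : Type*} [MeasureSpace Ω] (W : Ω → ℝ) (β : ℝ) : ℝ :=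
  Real.exp (cumulant W (2 * β) - 2 * cumulant W β) - 1

open ProbabilityTheory

theorem abs_log_one_add_sub_le {x : ℝ} (hx : -(1 / 2) ≤ x) :
    |log (1 + x) - (x - x ^ 2 / 2)| ≤ 4 * |x| ^ 3 := by
  rcases le_or_gt x (1 / 2) with hx' | hx'
  · have hax : |x| ≤ 1 / 2 := abs_le.mpr ⟨hx, hx'⟩
    have htaylor : |-x + x ^ 2 / 2 + log (1 + x)| ≤ |x| ^ 3 / (1 - |x|) := by
      simpa [Finset.sum_range_succ, sub_neg_eq_add, one_add_one_eq_two] using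
        abs_log_sub_add_sum_range_le (x := -x) (by rw [abs_neg]; linarith) 2
    have hdiv : |x| ^ 3 / (1 - |x|) ≤ 2 * |x| ^ 3 := by
      rw [div_le_iff₀ (by linarith)]
      nlinarith [pow_nonneg (abs_nonneg x) 3]
    calc |log (1 + x) - (x - x ^ 2 / 2)| = |-x + x ^ 2 / 2 + log (1 + x)| := by ring_nf
      _ ≤ 4 * |x| ^ 3 := by linarith [pow_nonneg (abs_nonneg x) 3]
  · have hlog_le : log (1 + x) ≤ x := by linarith [log_le_sub_one_of_pos (by linarith : 0 < 1 + x)]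
    have hlog_nonneg : 0 ≤ log (1 + x) := log_nonneg (by linarith)
    rw [abs_of_pos (by linarith : 0 < x), abs_le]
    constructor <;> nlinarith

theorem abs_sub_one_pow_three_le {u : ℝ} (hu : 0 ≤ u) : |u - 1| ^ 3 ≤ u ^ 3 + 1 := by
  rcases le_total u 1 with h | h
  · rw [abs_of_nonpos (by linarith)]
    nlinarith [pow_le_one₀ (by linarith : 0 ≤ 1 - u) (by linarith : 1 - u ≤ 1) (n := 3),
      pow_nonneg hu 3]
  · rw [abs_of_nonneg (by linarith)]
    linarith [pow_le_pow_left₀ (by linarith : 0 ≤ u - 1) (by linarith : u - 1 ≤ u) 3]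

-- The first term is `y E ξ - y² E ξ² / 2` with the moments of `ξ` written out.
theorem abs_mul_exp_sub_sq_mul_sub_le {c h y : ℝ} (hc : -1 ≤ c) (hh₀ : 0 ≤ h) (hh : h ≤ 1 / 2)
    (hy : 0 ≤ y) :
    |y * (exp h - 1) - y ^ 2 / 2 * (exp h ^ 2 * (1 + c) - 2 * exp h + 1) - (y * h - c * y ^ 2 / 2)|
      ≤ y * h ^ 2 + y ^ 2 * (2 * c + 4) * h := by
  have h1 : |exp h - 1 - h| ≤ h ^ 2 :=
    abs_exp_sub_one_sub_id_le (by rw [abs_of_nonneg hh₀]; linarith)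
  have h2 : |exp h - 1| ≤ 2 * h := by
    simpa [abs_of_nonneg hh₀] using
      abs_exp_sub_one_le (x := h) (by rw [abs_of_nonneg hh₀]; linarith)
  have h3 : |exp (2 * h) - 1| ≤ 4 * h := by
    have := abs_exp_sub_one_le (x := 2 * h) (by rw [abs_of_nonneg (by linarith)]; linarith)
    rw [abs_of_nonneg (show (0 : ℝ) ≤ 2 * h by linarith)] at this
    linarith
  have hsq : exp h ^ 2 = exp (2 * h) := by rw [← exp_nat_mul]; norm_num
  calc _ = |y * (exp h - 1 - h) - y ^ 2 / 2 * ((1 + c) * (exp (2 * h) - 1) - 2 * (exp h - 1))| := by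
          rw [hsq]
          ring_nf
    _ ≤ y * |exp h - 1 - h| + y ^ 2 / 2 * ((1 + c) * |exp (2 * h) - 1| + 2 * |exp h - 1|) := by
          refine (abs_sub _ _).trans ?_
          rw [abs_mul, abs_mul, abs_of_nonneg hy, abs_of_nonneg (by positivity : 0 ≤ y ^ 2 / 2)]
          gcongr
          refine (abs_sub _ _).trans ?_
          rw [abs_mul, abs_mul, abs_of_nonneg (by linarith : 0 ≤ 1 + c), abs_two]
    _ ≤ y * h ^ 2 + y ^ 2 / 2 * ((1 + c) * (4 * h) + 2 * (2 * h)) := by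
          gcongr
          linarith
    _ = y * h ^ 2 + y ^ 2 * (2 * c + 4) * h := by ring

theorem abs_integral_log_one_add_mul_sub_le {Ω : Type*} [MeasurableSpace Ω] {μ : Measure Ω}
    [IsProbabilityMeasure μ] {Y : Ω → ℝ} {y : ℝ} (hY : ∀ᵐ ω ∂μ, 0 ≤ Y ω) (hY₁ : Integrable Y μ)
    (hY₂ : Integrable (fun ω => Y ω ^ 2) μ) (hY₃ : Integrable (fun ω => Y ω ^ 3) μ)
    (hy₀ : 0 ≤ y) (hy : y ≤ 1 / 2) :
    |∫ ω, log (1 + y * (Y ω - 1)) ∂μ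
        - (y * (∫ ω, Y ω ∂μ - 1) - y ^ 2 / 2 * (∫ ω, Y ω ^ 2 ∂μ - 2 * ∫ ω, Y ω ∂μ + 1))|
      ≤ 4 * y ^ 3 * (∫ ω, Y ω ^ 3 ∂μ + 1) := by
  set P : Ω → ℝ := fun ω => y * (Y ω - 1) - (y * (Y ω - 1)) ^ 2 / 2
  have hP_eq : P = fun ω => (y + y ^ 2) * Y ω - y ^ 2 / 2 * Y ω ^ 2 - (y + y ^ 2 / 2) := by
    ext ω; ring
  have hP_int : Integrable P μ := by
    rw [hP_eq]; exact ((hY₁.const_mul _).sub (hY₂.const_mul _)).sub (integrable_const _)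
  have hP : ∫ ω, P ω ∂μ
      = y * (∫ ω, Y ω ∂μ - 1) - y ^ 2 / 2 * (∫ ω, Y ω ^ 2 ∂μ - 2 * ∫ ω, Y ω ∂μ + 1) := by
    simp only [hP_eq]
    rw [integral_sub _ (integrable_const _), integral_sub (hY₁.const_mul _) (hY₂.const_mul _),
      integral_const_mul, integral_const_mul, integral_const, probReal_univ, one_smul]
    · ring
    · exact (hY₁.const_mul _).sub (hY₂.const_mul _)
  have hG_int : Integrable (fun ω => 4 * y ^ 3 * (Y ω ^ 3 + 1)) μ :=
    (hY₃.add (integrable_const 1)).const_mul _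
  have hR : ∀ᵐ ω ∂μ, ‖log (1 + y * (Y ω - 1)) - P ω‖ ≤ 4 * y ^ 3 * (Y ω ^ 3 + 1) := by
    filter_upwards [hY] with ω hω
    have hx : -(1 / 2) ≤ y * (Y ω - 1) := by nlinarith
    calc ‖log (1 + y * (Y ω - 1)) - P ω‖ ≤ 4 * |y * (Y ω - 1)| ^ 3 := abs_log_one_add_sub_le hx
      _ = 4 * y ^ 3 * |Y ω - 1| ^ 3 := by rw [abs_mul, abs_of_nonneg hy₀]; ring
      _ ≤ 4 * y ^ 3 * (Y ω ^ 3 + 1) := by gcongr; exact abs_sub_one_pow_three_le hω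
  have hY_meas : AEMeasurable (fun ω => y * (Y ω - 1)) μ :=
    (hY₁.aemeasurable.sub_const 1).const_mul y
  have hR_int : Integrable (fun ω => log (1 + y * (Y ω - 1)) - P ω) μ :=
    hG_int.mono' ((measurable_log.comp_aemeasurable (hY_meas.const_add 1)).aestronglyMeasurable.sub
      hP_int.aestronglyMeasurable) hR
  have hlog_int : Integrable (fun ω => log (1 + y * (Y ω - 1))) μ :=
    (hR_int.add hP_int).congr (.of_forall fun ω => by simp)
  calc _ = ‖∫ ω, (log (1 + y * (Y ω - 1)) - P ω) ∂μ‖ := by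
          rw [integral_sub hlog_int hP_int, hP, Real.norm_eq_abs]
    _ ≤ ∫ ω, 4 * y ^ 3 * (Y ω ^ 3 + 1) ∂μ := norm_integral_le_of_norm_le hG_int hR
    _ = 4 * y ^ 3 * (∫ ω, Y ω ^ 3 ∂μ + 1) := by
          rw [integral_const_mul, integral_add hY₃ (integrable_const 1), integral_const,
            probReal_univ, one_smul]

theorem ae_eq_zero_of_ae_eq_const_of_integral_eq_zero {Ω : Type*} [MeasurableSpace Ω]
    {μ : Measure Ω} [IsProbabilityMeasure μ] {W : Ω → ℝ} {k : ℝ} (hk : ∀ᵐ ω ∂μ, W ω = k)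
    (hmean : ∫ ω, W ω ∂μ = 0) : ∀ᵐ ω ∂μ, W ω = 0 := by
  have : k = 0 := by
    rwa [integral_congr_ae hk, integral_const, probReal_univ, one_smul] at hmean
  simpa [this] using hk

section Tilt

variable {Ω : Type*} [MeasureSpace Ω] {W : Ω → ℝ} {β : ℝ}

noncomputable def tiltedWeight (W : Ω → ℝ) (β h : ℝ) (ω : Ω) : ℝ :=
  exp (β * W ω - cumulant W β + h)

theorem xiRV_eq_tiltedWeight_sub_one (h : ℝ) (ω : Ω) :
    xiRV W β h ω = tiltedWeight W β h ω - 1 := rfl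

theorem tiltedWeight_pow (h : ℝ) (k : ℕ) (ω : Ω) :
    tiltedWeight W β h ω ^ k = exp (k * β * W ω) * exp (k * h - k * cumulant W β) := by
  rw [tiltedWeight, ← exp_nat_mul, ← exp_add]
  ring_nf

theorem integrable_tiltedWeight_pow (h : ℝ) {k : ℕ}
    (hk : Integrable fun ω => exp (k * β * W ω)) :
    Integrable fun ω => tiltedWeight W β h ω ^ k := by
  simp_rw [tiltedWeight_pow]
  exact hk.mul_const _

theorem memLp_two_tiltedWeight (h : ℝ) (h₁ : Integrable fun ω => exp (β * W ω))
    (h₂ : Integrable fun ω => exp (2 * β * W ω)) : MemLp (tiltedWeight W β h) 2 := by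
  have h_int : Integrable (tiltedWeight W β h) := by
    simpa using integrable_tiltedWeight_pow (k := 1) h (by simpa using h₁)
  exact (memLp_two_iff_integrable_sq h_int.aestronglyMeasurable).2
    (integrable_tiltedWeight_pow (k := 2) h (by simpa using h₂))

variable [IsProbabilityMeasure (volume : Measure Ω)]

theorem exp_cumulant {t : ℝ}
    (ht : Integrable fun ω => exp (t * W ω)) : exp (cumulant W t) = ∫ ω, exp (t * W ω) :=
  exp_cgf ht

theorem integral_tiltedWeight_pow (h : ℝ) {k : ℕ}
    (hk : Integrable fun ω => exp (k * β * W ω)) :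
    ∫ ω, tiltedWeight W β h ω ^ k = exp (cumulant W (k * β) - k * cumulant W β + k * h) := by
  simp_rw [tiltedWeight_pow]
  rw [integral_mul_const, ← exp_cumulant hk, ← exp_add]
  ring_nf

theorem variance_tiltedWeight_zero (h₁ : Integrable fun ω => exp (β * W ω))
    (h₂ : Integrable fun ω => exp (2 * β * W ω)) :
    variance (tiltedWeight W β 0) volume = cBeta W β := by
  rw [variance_eq_sub (memLp_two_tiltedWeight 0 h₁ h₂)]
  have hm₁ := integral_tiltedWeight_pow (k := 1) (W := W) (β := β) 0 (by simpa using h₁)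
  have hm₂ := integral_tiltedWeight_pow (k := 2) (W := W) (β := β) 0 (by simpa using h₂)
  simp only [pow_one, Nat.cast_one, one_mul, mul_zero, add_zero, sub_self, exp_zero] at hm₁
  simp only [Pi.pow_apply, hm₂, hm₁, cBeta]
  norm_num

theorem cBeta_pos (hβ : β ≠ 0) (h₁ : Integrable fun ω => exp (β * W ω))
    (h₂ : Integrable fun ω => exp (2 * β * W ω)) (hmean : ∫ ω, W ω = 0)
    (hnd : ¬ ∀ᵐ ω, W ω = 0) : 0 < cBeta W β := by
  rw [← variance_tiltedWeight_zero h₁ h₂]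
  refine (variance_nonneg _ _).lt_of_ne fun hvar => hnd ?_
  have hconst := ae_eq_integral_of_variance_eq_zero (memLp_two_tiltedWeight 0 h₁ h₂) hvar.symm
  refine ae_eq_zero_of_ae_eq_const_of_integral_eq_zero
    (k := (log (∫ ω, tiltedWeight W β 0 ω) + cumulant W β) / β) ?_ hmean
  filter_upwards [hconst] with ω hω
  have hlog := congrArg log hω
  rw [tiltedWeight, log_exp] at hlog
  rw [eq_div_iff hβ]
  linarith

end Tilt

theorem abs_integral_log_one_add_mul_xiRV_sub_le {Ω : Type*} [MeasureSpace Ω]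
    [IsProbabilityMeasure (volume : Measure Ω)] {W : Ω → ℝ} {β a h : ℝ}
    (h₁ : Integrable fun ω => exp (β * W ω)) (h₂ : Integrable fun ω => exp (2 * β * W ω))
    (h₃ : Integrable fun ω => exp (3 * β * W ω)) (ha : 0 ≤ a) (hh₀ : 0 ≤ h) (hh : h ≤ 1 / 2)
    (hah : a * h ≤ 1 / 2) :
    |(∫ ω, log (1 + a * h * xiRV W β h ω)) - (a * h ^ 2 - cBeta W β * a ^ 2 * h ^ 2 / 2)|
      ≤ (a + a ^ 2 * (2 * cBeta W β + 4)
          + 4 * a ^ 3 * (exp (3 / 2) * exp (cumulant W (3 * β) - 3 * cumulant W β) + 1))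
        * h ^ 3 := by
  set c := cBeta W β
  set M := exp (cumulant W (3 * β) - 3 * cumulant W β)
  have hY₁ := integrable_tiltedWeight_pow (k := 1) h (by simpa using h₁)
  have hY₂ := integrable_tiltedWeight_pow (k := 2) h (by simpa using h₂)
  have hY₃ := integrable_tiltedWeight_pow (k := 3) h (by simpa using h₃)
  have hm₁ : ∫ ω, tiltedWeight W β h ω = exp h := by
    simpa using integral_tiltedWeight_pow (k := 1) h (by simpa using h₁)
  have hm₂ : ∫ ω, tiltedWeight W β h ω ^ 2 = exp h ^ 2 * (1 + c) := by
    rw [integral_tiltedWeight_pow h (by simpa using h₂)]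
    simp only [c, cBeta, add_sub_cancel]
    rw [← exp_nat_mul, ← exp_add]
    push_cast
    ring_nf
  have hm₃ : ∫ ω, tiltedWeight W β h ω ^ 3 = exp (3 * h) * M := by
    rw [integral_tiltedWeight_pow h (by simpa using h₃), ← exp_add]
    push_cast
    ring_nf
  have hrandom := abs_integral_log_one_add_mul_sub_le (Y := tiltedWeight W β h) (y := a * h)
    (ae_of_all _ fun ω => (exp_pos _).le) (by simpa only [pow_one] using hY₁) hY₂ hY₃
    (by positivity) hah
  rw [hm₁, hm₂, hm₃] at hrandom
  simp_rw [← xiRV_eq_tiltedWeight_sub_one] at hrandom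
  have hc : -1 ≤ c := by
    simp only [c, cBeta]
    linarith [exp_pos (cumulant W (2 * β) - 2 * cumulant W β)]
  have hdet := abs_mul_exp_sub_sq_mul_sub_le (y := a * h) hc hh₀ hh (by positivity)
  have hM : exp (3 * h) * M + 1 ≤ exp (3 / 2) * M + 1 := by
    gcongr; linarith
  rw [show a * h ^ 2 - c * a ^ 2 * h ^ 2 / 2 = a * h * h - c * (a * h) ^ 2 / 2 by ring]
  calc _ ≤ _ := abs_sub_le _ _ _
    _ ≤ 4 * (a * h) ^ 3 * (exp (3 * h) * M + 1)
          + (a * h * h ^ 2 + (a * h) ^ 2 * (2 * c + 4) * h) := add_le_add hrandom hdet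
    _ ≤ 4 * (a * h) ^ 3 * (exp (3 / 2) * M + 1)
          + (a * h * h ^ 2 + (a * h) ^ 2 * (2 * c + 4) * h) := by gcongr
    _ = _ := by ring

theorem sq_div_four_mul_le_of_abs_sub_le {c C h I : ℝ} (hc : 0 < c) (hCh : C * h ≤ 1 / (4 * c))
    (hI : |I - (1 / c * h ^ 2 - c * (1 / c) ^ 2 * h ^ 2 / 2)| ≤ C * h ^ 3) :
    h ^ 2 / (4 * c) ≤ I := by
  have hmain : 1 / c * h ^ 2 - c * (1 / c) ^ 2 * h ^ 2 / 2 = 2 * (h ^ 2 / (4 * c)) := by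
    field_simp; ring
  have herr : C * h ^ 3 ≤ h ^ 2 / (4 * c) := by
    calc C * h ^ 3 = C * h * h ^ 2 := by ring
      _ ≤ 1 / (4 * c) * h ^ 2 := by gcongr
      _ = h ^ 2 / (4 * c) := by ring
  rw [hmain] at hI
  linarith [(abs_le.mp hI).1]

theorem stmt_18_general {Ω : Type*} [MeasureSpace Ω] [IsProbabilityMeasure (volume : Measure Ω)]
    (W : Ω → ℝ) (β : ℝ) (hβ : 0 < β)
    (hmean : ∫ ω, W ω = 0)
    (hnd : ¬ (∀ᵐ ω, W ω = 0))
    (hexp : ∀ t : ℝ, t ∈ Set.Icc 0 (3 * β) → Integrable (fun ω => Real.exp (t * W ω))) :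
    ∃ C > (0 : ℝ), ∃ h0 > (0 : ℝ), ∀ h ∈ Set.Ioo (0 : ℝ) h0,
      |(∫ ω, Real.log (1 + (1 / cBeta W β) * h * xiRV W β h ω))
          - ((1 / cBeta W β) * h ^ 2 - cBeta W β * (1 / cBeta W β) ^ 2 * h ^ 2 / 2)|
        ≤ C * h ^ 3 ∧
      h ^ 2 / (4 * cBeta W β)
        ≤ ∫ ω, Real.log (1 + (1 / cBeta W β) * h * xiRV W β h ω) := by
  have h₁ := hexp β ⟨hβ.le, by linarith⟩
  have h₂ := hexp (2 * β) ⟨by positivity, by linarith⟩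
  have h₃ := hexp (3 * β) ⟨by positivity, le_rfl⟩
  have hc : 0 < cBeta W β := cBeta_pos hβ.ne' h₁ h₂ hmean hnd
  set c := cBeta W β
  set C := 1 / c + (1 / c) ^ 2 * (2 * c + 4)
    + 4 * (1 / c) ^ 3 * (exp (3 / 2) * exp (cumulant W (3 * β) - 3 * cumulant W β) + 1)
  have hC : 0 < C := by positivity
  refine ⟨C, hC, min (1 / 2) (min (c / 2) (1 / (4 * c * C))), by positivity, fun h ⟨hh₀, hh⟩ => ?_⟩
  simp only [lt_min_iff] at hh
  obtain ⟨hh_half, hh_c, hh_C⟩ := hh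
  have hah : 1 / c * h ≤ 1 / 2 := by
    rw [div_mul_eq_mul_div, one_mul, div_le_iff₀ hc]; linarith
  have hCh : C * h ≤ 1 / (4 * c) := by
    calc C * h ≤ C * (1 / (4 * c * C)) := by gcongr
      _ = 1 / (4 * c) := by field_simp
  have hexpansion := abs_integral_log_one_add_mul_xiRV_sub_le h₁ h₂ h₃ (by positivity) hh₀.le
    hh_half.le hah
  exact ⟨hexpansion, sq_div_four_mul_le_of_abs_sub_le hc hCh hexpansion⟩

theorem stmt_18 {Ω : Type*} [MeasureSpace Ω] [IsProbabilityMeasure (volume : Measure Ω)]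
    (W : Ω → ℝ) (β : ℝ) (hβ : 0 < β)
    (hintW : Integrable W) (hmean : ∫ ω, W ω = 0)
    (hnd : ¬ (∀ᵐ ω, W ω = 0))
    (hexp : ∀ t : ℝ, t ∈ Set.Icc 0 (3 * β) → Integrable (fun ω => Real.exp (t * W ω))) :
    ∃ C > (0 : ℝ), ∃ h0 > (0 : ℝ), ∀ h ∈ Set.Ioo (0 : ℝ) h0,
      |(∫ ω, Real.log (1 + (1 / cBeta W β) * h * xiRV W β h ω))
          - ((1 / cBeta W β) * h ^ 2 - cBeta W β * (1 / cBeta W β) ^ 2 * h ^ 2 / 2)|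
        ≤ C * h ^ 3 ∧
      h ^ 2 / (4 * cBeta W β)
        ≤ ∫ ω, Real.log (1 + (1 / cBeta W β) * h * xiRV W β h ω) :=
  stmt_18_general W β hβ hmean hnd hexp
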